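/- arXiv:2301.12315 — 3 statements merged into one kernel-verified Lean document; each statement's English description precedes it below -/
import Mathlib

section
/- Let (V, h) be a finite-dimensional real inner product space with norm ‖·‖ and let W ∈ V with ‖W‖ > 1 (strong wind). Then for every v ∈ V ∖ {0}: the set S(v) := {r > 0 : ‖v/r − W‖ = 1} is nonempty if and only if ⟨W, v⟩ > 0 and ⟨W, v⟩² ≥ (‖W‖² − 1)·‖v‖²; moreover S(v) has exactly two elements if ⟨W, v⟩ > 0 and ⟨W, v⟩² > (‖W‖² − 1)·‖v‖², and exactly one element if ⟨W, v⟩ > 0 and ⟨W, v⟩² = (‖W‖² − 1)·‖v‖². -/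
/-!
Writing `t = r⁻¹`, the condition `‖t • v - W‖ = 1` multiplied by `r²` becomes the quadratic
equation `(‖W‖² - 1) r² - 2 ⟪W, v⟫ r + ‖v‖² = 0` in `r`. Under strong wind both its leading
and its constant coefficient are positive, so its roots have the same sign, namely the sign of
`⟪W, v⟫`; there are two, one or no real roots according to the sign of the reduced discriminant
`⟪W, v⟫² - (‖W‖² - 1) ‖v‖²`.
-/

section PositiveRoots

variable {a b c : ℝ}

theorem pos_and_mul_le_sq_of_quadratic_eq_zero (ha : 0 ≤ a) (hc : 0 < c) {x : ℝ} (hx : 0 < x)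
    (h : a * x ^ 2 - 2 * b * x + c = 0) : 0 < b ∧ a * c ≤ b ^ 2 := by
  have hbx : 0 < b * x := by nlinarith [mul_nonneg ha (sq_nonneg x)]
  refine ⟨pos_of_mul_pos_left hbx hx.le, ?_⟩
  have hdisc : b ^ 2 - a * c = (a * x - b) ^ 2 := by linear_combination (-a) * h
  linarith [sq_nonneg (a * x - b)]

theorem setOf_pos_quadratic_eq_zero (ha : 0 < a) (hc : 0 < c) (hb : 0 < b)
    (hdisc : a * c ≤ b ^ 2) :
    {x : ℝ | 0 < x ∧ a * x ^ 2 - 2 * b * x + c = 0} =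
      {(b - √(b ^ 2 - a * c)) / a, (b + √(b ^ 2 - a * c)) / a} := by
  set s := √(b ^ 2 - a * c)
  have hs : s * s = b ^ 2 - a * c := Real.mul_self_sqrt (by linarith)
  have hsb : s < b := (Real.sqrt_lt' hb).2 (by nlinarith)
  have hroots : ∀ x, a * x ^ 2 - 2 * b * x + c = 0 ↔ x = (b - s) / a ∨ x = (b + s) / a := by
    intro x
    have h := quadratic_eq_zero_iff ha.ne' (b := -2 * b) (c := c) (s := 2 * s)
      (by rw [discrim]; linear_combination (-4) * hs) x
    have hplus : (-(-2 * b) + 2 * s) / (2 * a) = (b + s) / a := by field_simp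
    have hminus : (-(-2 * b) - 2 * s) / (2 * a) = (b - s) / a := by field_simp
    rw [hplus, hminus, or_comm] at h
    rw [← h]
    constructor <;> intro h' <;> linear_combination h'
  ext x
  simp only [Set.mem_ofPred_eq, Set.mem_insert_iff, Set.mem_singleton_iff, hroots]
  constructor
  · exact And.right
  · rintro (rfl | rfl)
    · exact ⟨div_pos (sub_pos.2 hsb) ha, .inl rfl⟩
    · exact ⟨div_pos (by positivity) ha, .inr rfl⟩

theorem setOf_pos_quadratic_eq_zero_nonempty_iff (ha : 0 < a) (hc : 0 < c) :
    {x : ℝ | 0 < x ∧ a * x ^ 2 - 2 * b * x + c = 0}.Nonempty ↔ 0 < b ∧ a * c ≤ b ^ 2 := by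
  constructor
  · rintro ⟨x, hx, h⟩
    exact pos_and_mul_le_sq_of_quadratic_eq_zero ha.le hc hx h
  · rintro ⟨hb, hdisc⟩
    rw [setOf_pos_quadratic_eq_zero ha hc hb hdisc]
    exact Set.insert_nonempty _ _

theorem encard_setOf_pos_quadratic_eq_zero_of_lt (ha : 0 < a) (hc : 0 < c) (hb : 0 < b)
    (hdisc : a * c < b ^ 2) :
    {x : ℝ | 0 < x ∧ a * x ^ 2 - 2 * b * x + c = 0}.encard = 2 := by
  rw [setOf_pos_quadratic_eq_zero ha hc hb hdisc.le]
  have hs : 0 < √(b ^ 2 - a * c) := Real.sqrt_pos.2 (sub_pos.2 hdisc)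
  refine Set.encard_pair fun h => ?_
  rw [div_left_inj' ha.ne'] at h
  linarith

theorem encard_setOf_pos_quadratic_eq_zero_of_eq (ha : 0 < a) (hc : 0 < c) (hb : 0 < b)
    (hdisc : b ^ 2 = a * c) :
    {x : ℝ | 0 < x ∧ a * x ^ 2 - 2 * b * x + c = 0}.encard = 1 := by
  rw [setOf_pos_quadratic_eq_zero ha hc hb hdisc.ge, hdisc, sub_self, Real.sqrt_zero,
    sub_zero, add_zero, Set.pair_eq_singleton, Set.encard_singleton]

end PositiveRoots

section Zermelo

variable {V : Type*} [NormedAddCommGroup V] [InnerProductSpace ℝ V]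

theorem norm_inv_smul_sub_eq_one_iff (v W : V) {r : ℝ} (hr : 0 < r) :
    ‖r⁻¹ • v - W‖ = 1 ↔ (‖W‖ ^ 2 - 1) * r ^ 2 - 2 * inner ℝ W v * r + ‖v‖ ^ 2 = 0 := by
  rw [← pow_eq_one_iff_of_nonneg (norm_nonneg _) two_ne_zero, norm_sub_sq_real, norm_smul,
    real_inner_smul_left, real_inner_comm, Real.norm_of_nonneg (inv_nonneg.2 hr.le)]
  constructor <;> intro h
  · field_simp at h
    linear_combination h
  · field_simp
    linear_combination h

theorem setOf_norm_inv_smul_sub_eq_one (v W : V) :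
    {r : ℝ | 0 < r ∧ ‖r⁻¹ • v - W‖ = 1} =
      {r : ℝ | 0 < r ∧ (‖W‖ ^ 2 - 1) * r ^ 2 - 2 * inner ℝ W v * r + ‖v‖ ^ 2 = 0} :=
  Set.ext fun _ => and_congr_right (norm_inv_smul_sub_eq_one_iff v W)

end Zermelo

theorem stmt3_general {V : Type*} [NormedAddCommGroup V] [InnerProductSpace ℝ V]
    (W : V) (hW : 1 < ‖W‖) :
    ∀ v : V, v ≠ 0 →
      (({r : ℝ | 0 < r ∧ ‖r⁻¹ • v - W‖ = 1}.Nonempty) ↔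
        (0 < (inner ℝ W v : ℝ) ∧ (‖W‖ ^ 2 - 1) * ‖v‖ ^ 2 ≤ (inner ℝ W v : ℝ) ^ 2)) ∧
      (0 < (inner ℝ W v : ℝ) → (‖W‖ ^ 2 - 1) * ‖v‖ ^ 2 < (inner ℝ W v : ℝ) ^ 2 →
        {r : ℝ | 0 < r ∧ ‖r⁻¹ • v - W‖ = 1}.encard = 2) ∧
      (0 < (inner ℝ W v : ℝ) → (inner ℝ W v : ℝ) ^ 2 = (‖W‖ ^ 2 - 1) * ‖v‖ ^ 2 →
        {r : ℝ | 0 < r ∧ ‖r⁻¹ • v - W‖ = 1}.encard = 1) := by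
  intro v hv
  have hlead : 0 < ‖W‖ ^ 2 - 1 := by nlinarith
  have hconst : 0 < ‖v‖ ^ 2 := by positivity
  rw [setOf_norm_inv_smul_sub_eq_one]
  exact ⟨setOf_pos_quadratic_eq_zero_nonempty_iff hlead hconst,
    encard_setOf_pos_quadratic_eq_zero_of_lt hlead hconst,
    encard_setOf_pos_quadratic_eq_zero_of_eq hlead hconst⟩

/-- Strong wind `‖W‖ > 1`: for `v ≠ 0`, the set `S(v) = {r > 0 : ‖v/r − W‖ = 1}` is nonempty
iff `⟨W,v⟩ > 0` and `⟨W,v⟩² ≥ (‖W‖² − 1)‖v‖²`; it has exactly two elements when the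
inequality is strict, and exactly one element in the equality case. -/
theorem stmt3 {V : Type*} [NormedAddCommGroup V] [InnerProductSpace ℝ V]
    [FiniteDimensional ℝ V] (W : V) (hW : 1 < ‖W‖) :
    ∀ v : V, v ≠ 0 →
      (({r : ℝ | 0 < r ∧ ‖r⁻¹ • v - W‖ = 1}.Nonempty) ↔
        (0 < (inner ℝ W v : ℝ) ∧ (‖W‖ ^ 2 - 1) * ‖v‖ ^ 2 ≤ (inner ℝ W v : ℝ) ^ 2)) ∧
      (0 < (inner ℝ W v : ℝ) → (‖W‖ ^ 2 - 1) * ‖v‖ ^ 2 < (inner ℝ W v : ℝ) ^ 2 →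
        {r : ℝ | 0 < r ∧ ‖r⁻¹ • v - W‖ = 1}.encard = 2) ∧
      (0 < (inner ℝ W v : ℝ) → (inner ℝ W v : ℝ) ^ 2 = (‖W‖ ^ 2 - 1) * ‖v‖ ^ 2 →
        {r : ℝ | 0 < r ∧ ‖r⁻¹ • v - W‖ = 1}.encard = 1) :=
  stmt3_general W hW
end

section
/- Let F be a Minkowski norm on a finite-dimensional real vector space V, let W ∈ V with F(−W) < 1, and let Z be the Zermelo metric with navigation data (F, W). Let ℓ : V → ℝ be a nonzero linear functional. Suppose v_F ∈ V ∖ {0} satisfies g^F_{v_F}(v_F, u) = ℓ(u) for all u ∈ V, and v_Z ∈ V ∖ {0} satisfies g^Z_{v_Z}(v_Z, u) = ℓ(u) for all u ∈ V. Then: (a) v_Z/Z(v_Z) = v_F/F(v_F) + W; and (b) Z(v_Z) = F(v_F) + ℓ(W). -/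
open Filter Topology Set


/-- The fundamental tensor of a Minkowski norm `F` at `v`:
`g^F_v(u₁,u₂) = (1/2) ∂²/∂t₂∂t₁ F²(v + t₁u₁ + t₂u₂) |_{t₁=t₂=0}`. -/
noncomputable def fundTensor {V : Type*} [NormedAddCommGroup V] [NormedSpace ℝ V]
    (F : V → ℝ) (v u₁ u₂ : V) : ℝ :=
  (1 / 2) * deriv (fun t₂ : ℝ => deriv (fun t₁ : ℝ => (F (v + t₁ • u₁ + t₂ • u₂)) ^ 2) 0) 0

/-- `B` is a positive-definite symmetric bilinear form. -/
def IsPosDefSymmBilin {V : Type*} [NormedAddCommGroup V] [NormedSpace ℝ V]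
    (B : V → V → ℝ) : Prop :=
  (∃ b : LinearMap.BilinForm ℝ V, ∀ u₁ u₂ : V, b u₁ u₂ = B u₁ u₂) ∧
    (∀ u₁ u₂ : V, B u₁ u₂ = B u₂ u₁) ∧ (∀ u : V, u ≠ 0 → 0 < B u u)

/-- A Minkowski norm on a finite-dimensional real vector space. -/
structure IsMinkowskiNorm {V : Type*} [NormedAddCommGroup V] [NormedSpace ℝ V]
    (F : V → ℝ) : Prop where
  continuous : Continuous F
  map_zero : F 0 = 0
  pos : ∀ v : V, v ≠ 0 → 0 < F v
  smooth : ContDiffOn ℝ (⊤ : ℕ∞) F {(0 : V)}ᶜ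
  homog : ∀ r : ℝ, 0 < r → ∀ v : V, F (r • v) = r * F v
  posdef : ∀ v : V, v ≠ 0 → IsPosDefSymmBilin (fundTensor F v)


section aux
variable {V : Type*} [NormedAddCommGroup V] [NormedSpace ℝ V]

/-- Euler's identity for positively 1-homogeneous functions. -/
lemma euler_one_homog {f : V → ℝ} {x : V}
    (hd : DifferentiableAt ℝ f x)
    (hhom : ∀ r : ℝ, 0 < r → f (r • x) = r * f x) :
    fderiv ℝ f x x = f x := by
  have hc : HasDerivAt (fun r : ℝ => r • x) x 1 := by
    simpa using (hasDerivAt_id (1:ℝ)).smul_const x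
  have hd' : HasFDerivAt f (fderiv ℝ f x) ((1:ℝ) • x) := by
    rw [one_smul]; exact hd.hasFDerivAt
  have h1 : HasDerivAt (fun r : ℝ => f (r • x)) (fderiv ℝ f x x) 1 := by
    have := hd'.comp_hasDerivAt 1 hc
    exact this
  have h2 : (fun r : ℝ => f (r • x)) =ᶠ[𝓝 (1:ℝ)] fun r => r * f x := by
    filter_upwards [eventually_gt_nhds (show (0:ℝ) < 1 by norm_num)] with r hr
    exact hhom r hr
  have h3 : HasDerivAt (fun r : ℝ => f (r • x)) (f x) 1 := by
    have h4 : HasDerivAt (fun r : ℝ => r * f x) (f x) 1 := by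
      simpa using (hasDerivAt_id (1:ℝ)).mul_const (f x)
    exact h4.congr_of_eventuallyEq h2
  exact h1.unique h3

/-- The derivative of a positively 1-homogeneous function is 0-homogeneous. -/
lemma fderiv_one_homog {f : V → ℝ} {x : V} {r : ℝ} (hr : 0 < r)
    (hd : DifferentiableAt ℝ f (r • x)) (hd' : DifferentiableAt ℝ f x)
    (hhom : ∀ s : ℝ, 0 < s → ∀ y : V, f (s • y) = s * f y) :
    fderiv ℝ f (r • x) = fderiv ℝ f x := by
  have hm : HasFDerivAt (fun y : V => r • y) (r • ContinuousLinearMap.id ℝ V) x := by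
    exact (r • ContinuousLinearMap.id ℝ V).hasFDerivAt (x := x)
  have hcomp : HasFDerivAt (f ∘ fun y : V => r • y)
      ((fderiv ℝ f (r • x)).comp (r • ContinuousLinearMap.id ℝ V)) x :=
    hd.hasFDerivAt.comp x hm
  have heq : (f ∘ fun y : V => r • y) = fun y => r * f y := funext fun y => hhom r hr y
  have h2 : HasFDerivAt (fun y : V => r * f y) (r • fderiv ℝ f x) x :=
    hd'.hasFDerivAt.const_mul r
  rw [heq] at hcomp
  have h3 := hcomp.unique h2
  ext h
  have h4 := ContinuousLinearMap.ext_iff.mp h3 h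
  simp only [ContinuousLinearMap.comp_apply, ContinuousLinearMap.smul_apply,
    ContinuousLinearMap.id_apply, map_smul, smul_eq_mul] at h4
  exact mul_left_cancel₀ hr.ne' h4

lemma hasFDerivAt_sq {f : V → ℝ} {x : V} (hd : DifferentiableAt ℝ f x) :
    HasFDerivAt (fun y => f y ^ 2) ((2 * f x) • fderiv ℝ f x) x := by
  have := hd.hasFDerivAt.mul hd.hasFDerivAt
  have h2 : (fun y => f y * f y) = fun y => f y ^ 2 := by funext y; ring
  rw [show f * f = (fun y => f y * f y) from rfl, h2] at this
  rw [two_mul, add_smul]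
  exact this

end aux

section aux2
variable {V : Type*} [NormedAddCommGroup V] [NormedSpace ℝ V]

lemma hasFDerivAt_sq' {f : V → ℝ} {x : V} (hd : DifferentiableAt ℝ f x) :
    HasFDerivAt (fun y => f y ^ 2) ((2 * f x) • fderiv ℝ f x) x := by
  have := hd.hasFDerivAt.mul hd.hasFDerivAt
  have h2 : (fun y => f y * f y) = fun y => f y ^ 2 := by funext y; ring
  rw [show f * f = (fun y => f y * f y) from rfl, h2] at this
  rw [two_mul, add_smul]
  exact this

/-- The inner derivative in `fundTensor` computed via the chain rule. -/
lemma fundTensor_eq_outer {f : V → ℝ} {U : Set V} (hU : IsOpen U)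
    (hf : ContDiffOn ℝ 1 f U) {v : V} (hv : v ∈ U) (u₁ u₂ : V) :
    fundTensor f v u₁ u₂
      = (1/2) * deriv (fun t : ℝ =>
          ((2 * f (v + t • u₂)) • fderiv ℝ f (v + t • u₂)) u₁) 0 := by
  have hcont : Continuous fun t : ℝ => v + t • u₂ :=
    continuous_const.add (continuous_id.smul continuous_const)
  have hev : ∀ᶠ t : ℝ in 𝓝 0, v + t • u₂ ∈ U := by
    have := hcont.continuousAt (x := (0:ℝ)).preimage_mem_nhds
      (hU.mem_nhds (by simpa using hv))
    exact this
  unfold fundTensor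
  congr 1
  apply Filter.EventuallyEq.deriv_eq
  filter_upwards [hev] with t ht
  have hdx : DifferentiableAt ℝ f (v + t • u₂) :=
    (hf.contDiffAt (hU.mem_nhds ht)).differentiableAt one_ne_zero
  have hcurve : HasDerivAt (fun t₁ : ℝ => v + t₁ • u₁ + t • u₂) u₁ 0 := by
    simpa using ((((hasDerivAt_id (0:ℝ)).smul_const u₁).const_add v).add_const (t • u₂))
  have hsq : HasFDerivAt (fun y => f y ^ 2)
      ((2 * f (v + t • u₂)) • fderiv ℝ f (v + t • u₂)) (v + (0:ℝ) • u₁ + t • u₂) := by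
    rw [show v + (0:ℝ) • u₁ + t • u₂ = v + t • u₂ by simp]
    exact hasFDerivAt_sq' hdx
  exact (hsq.comp_hasDerivAt 0 hcurve).deriv

/-- The diagonal formula: `fundTensor f v v u = f v * dF_v(u)` for 1-homogeneous `f`. -/
lemma fundTensor_radial {f : V → ℝ} {U : Set V} (hU : IsOpen U)
    (hf : ContDiffOn ℝ 1 f U) {v : V} (hv : v ∈ U)
    (hhom : ∀ x ∈ U, ∀ r : ℝ, 0 < r → f (r • x) = r * f x) (u : V) :
    fundTensor f v v u = f v * fderiv ℝ f v u := by
  classical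
  set DH : V → (V →L[ℝ] ℝ) := fun x => (2 * f x) • fderiv ℝ f x with hDH
  have hdiff : ∀ x ∈ U, DifferentiableAt ℝ f x := fun x hx =>
    (hf.contDiffAt (hU.mem_nhds hx)).differentiableAt one_ne_zero
  have heuler : ∀ x ∈ U, fderiv ℝ f x x = f x := fun x hx =>
    euler_one_homog (hdiff x hx) (fun r hr => hhom x hx r hr)
  have hcont : Continuous fun t : ℝ => v + t • u :=
    continuous_const.add (continuous_id.smul continuous_const)
  have hev : ∀ᶠ t : ℝ in 𝓝 0, v + t • u ∈ U := by
    have := hcont.continuousAt (x := (0:ℝ)).preimage_mem_nhds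
      (hU.mem_nhds (by simpa using hv))
    exact this
  rw [fundTensor_eq_outer hU hf hv v u]
  have hout : (fun t : ℝ => (DH (v + t • u)) v)
      =ᶠ[𝓝 0] fun t : ℝ => 2 * f (v + t • u) ^ 2 - t * (DH (v + t • u)) u := by
    filter_upwards [hev] with t ht
    have hveq : v = (v + t • u) - t • u := by abel
    have : (DH (v + t • u)) v
        = (DH (v + t • u)) (v + t • u) - t * (DH (v + t • u)) u := by
      conv_lhs => rw [hveq]
      rw [map_sub, map_smul]; simp
    rw [this]
    have : (DH (v + t • u)) (v + t • u) = 2 * f (v + t • u) ^ 2 := by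
      simp only [hDH, ContinuousLinearMap.smul_apply, smul_eq_mul]
      rw [heuler _ ht]; ring
    rw [this]
  have h1 : HasDerivAt (fun t : ℝ => f (v + t • u) ^ 2) ((DH v) u) 0 := by
    have hcurve : HasDerivAt (fun t : ℝ => v + t • u) u 0 := by
      simpa using (((hasDerivAt_id (0:ℝ)).smul_const u).const_add v)
    have hsq : HasFDerivAt (fun y => f y ^ 2) (DH v) (v + (0:ℝ) • u) := by
      rw [show v + (0:ℝ) • u = v by simp]
      exact hasFDerivAt_sq' (hdiff v hv)
    have := hsq.comp_hasDerivAt 0 hcurve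
    exact this
  have hρ : ContinuousAt (fun t : ℝ => (DH (v + t • u)) u) 0 := by
    have hDHcont : ContinuousOn DH U := by
      refine ContinuousOn.smul (f := fun x => 2 * f x) (g := fun x => fderiv ℝ f x) ?_ ?_
      · exact continuousOn_const.mul hf.continuousOn
      · exact hf.continuousOn_fderiv_of_isOpen hU le_rfl
    have h2 : ContinuousAt DH v := hDHcont.continuousAt (hU.mem_nhds hv)
    have h3 : ContinuousAt (fun t : ℝ => DH (v + t • u)) 0 := by
      have := ContinuousAt.comp (g := DH) (x := (0:ℝ))
        (f := fun t : ℝ => v + t • u) (by simpa using h2) hcont.continuousAt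
      exact this
    exact ((ContinuousLinearMap.apply ℝ ℝ u).continuous.continuousAt).comp h3
  have h2 : HasDerivAt (fun t : ℝ => t * (DH (v + t • u)) u) ((DH v) u) 0 := by
    rw [hasDerivAt_iff_tendsto_slope]
    have hsl : ∀ᶠ t in 𝓝[≠] (0:ℝ),
        (fun t : ℝ => (DH (v + t • u)) u) t
          = slope (fun t : ℝ => t * (DH (v + t • u)) u) 0 t := by
      filter_upwards [self_mem_nhdsWithin] with t ht
      have ht' : (t : ℝ) ≠ 0 := ht
      rw [slope_def_field]; field_simp; simp
    have hlim : Filter.Tendsto (fun t : ℝ => (DH (v + t • u)) u) (𝓝[≠] (0:ℝ))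
        (𝓝 ((DH v) u)) := by
      have := hρ.tendsto.mono_left (nhdsWithin_le_nhds (s := {(0:ℝ)}ᶜ))
      simpa using this
    exact Filter.Tendsto.congr' hsl hlim
  have h3 : HasDerivAt (fun t : ℝ => 2 * f (v + t • u) ^ 2 - t * (DH (v + t • u)) u)
      (2 * (DH v) u - (DH v) u) 0 := (h1.const_mul 2).sub h2
  rw [hout.deriv_eq, h3.deriv]
  have : (DH v) u = 2 * f v * fderiv ℝ f v u := by
    simp [hDH, mul_assoc]
  rw [this]; ring

end aux2

section mink
variable {V : Type*} [NormedAddCommGroup V] [NormedSpace ℝ V]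
variable {F : V → ℝ}

lemma IsMinkowskiNorm.c1 (hF : IsMinkowskiNorm F) : ContDiffOn ℝ 1 F {(0:V)}ᶜ := hF.smooth.of_le (by simp)

lemma IsMinkowskiNorm.ne_zero (hF : IsMinkowskiNorm F) {x : V} (hx : x ≠ 0) : F x ≠ 0 := (hF.pos x hx).ne'

lemma IsMinkowskiNorm.diffAt (hF : IsMinkowskiNorm F) {x : V} (hx : x ≠ 0) : DifferentiableAt ℝ F x :=
  (hF.c1.contDiffAt ((isOpen_compl_singleton).mem_nhds hx)).differentiableAt one_ne_zero

lemma IsMinkowskiNorm.euler (hF : IsMinkowskiNorm F) {x : V} (hx : x ≠ 0) : fderiv ℝ F x x = F x :=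
  euler_one_homog (hF.diffAt hx) (fun r hr => hF.homog r hr x)

lemma IsMinkowskiNorm.fderiv_smul (hF : IsMinkowskiNorm F) {x : V} (hx : x ≠ 0) {r : ℝ} (hr : 0 < r) :
    fderiv ℝ F (r • x) = fderiv ℝ F x :=
  fderiv_one_homog hr (hF.diffAt (by simp [smul_ne_zero hr.ne' hx])) (hF.diffAt hx)
    (fun s hs y => hF.homog s hs y)

lemma IsMinkowskiNorm.nonzero_of_eq_one (hF : IsMinkowskiNorm F) {a : V} (ha : F a = 1) : a ≠ 0 := by
  intro h; rw [h, hF.map_zero] at ha; norm_num at ha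

/-- Strict convexity on the indicatrix: if `F a = F b = 1` and `a ≠ b` then `dF_a(b) < 1`. -/
lemma IsMinkowskiNorm.strict_ineq (hF : IsMinkowskiNorm F) {a b : V} (ha : F a = 1) (hb : F b = 1) (hne : a ≠ b) :
    fderiv ℝ F a b < 1 := by
  have ha0 : a ≠ 0 := hF.nonzero_of_eq_one ha
  have hb0 : b ≠ 0 := hF.nonzero_of_eq_one hb
  by_cases hμ : ∃ μ : ℝ, b = μ • a
  · obtain ⟨μ, rfl⟩ := hμ
    have hμ0 : μ ≤ 0 := by
      by_contra hμpos
      push_neg at hμpos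
      have := hF.homog μ hμpos a
      rw [hb, ha, mul_one] at this
      exact hne (by rw [← this, one_smul])
    have : fderiv ℝ F a (μ • a) = μ * F a := by
      rw [map_smul, hF.euler ha0]; simp
    rw [this, ha, mul_one]
    linarith
  · have h0 : b - a ≠ 0 := sub_ne_zero.mpr (Ne.symm hne)
    set h : V := b - a with hh
    have hseg : ∀ t : ℝ, a + t • h ≠ 0 := by
      intro t hcontra
      rcases eq_or_ne t 0 with rfl | ht0
      · simp at hcontra; exact ha0 hcontra
      · apply hμ
        have h1 : t • (b - a) = -a := eq_neg_of_add_eq_zero_right hcontra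
        have h2 : b - a = t⁻¹ • (-a) := by
          rw [← h1, smul_smul, inv_mul_cancel₀ ht0, one_smul]
        refine ⟨1 - t⁻¹, ?_⟩
        calc b = (b - a) + a := by abel
        _ = t⁻¹ • (-a) + a := by rw [h2]
        _ = (1 - t⁻¹) • a := by rw [smul_neg, sub_smul, one_smul]; abel
    set DH : V → (V →L[ℝ] ℝ) := fun x => (2 * F x) • fderiv ℝ F x with hDH
    set φ : ℝ → ℝ := fun t => F (a + t • h) ^ 2 with hφ
    set φ' : ℝ → ℝ := fun t => (DH (a + t • h)) h with hφ'
    have hφd : ∀ t : ℝ, HasDerivAt φ (φ' t) t := by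
      intro t
      have hcurve : HasDerivAt (fun s : ℝ => a + s • h) h t := by
        simpa using (((hasDerivAt_id t).smul_const h).const_add a)
      have hsq : HasFDerivAt (fun y => F y ^ 2) (DH (a + t • h)) (a + t • h) :=
        hasFDerivAt_sq' (hF.diffAt (hseg t))
      exact hsq.comp_hasDerivAt t hcurve
    have hderiv_pos : ∀ t : ℝ, 0 < deriv φ' t := by
      intro t
      have hshift : deriv φ' t = deriv (fun s => φ' (t + s)) 0 := by
        rw [deriv_comp_const_add]; simp
      have hfe : (fun s : ℝ => φ' (t + s))
          = fun s : ℝ => ((2 * F ((a + t • h) + s • h)) •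
              fderiv ℝ F ((a + t • h) + s • h)) h := by
        funext s
        have : a + (t + s) • h = (a + t • h) + s • h := by
          rw [add_smul]; abel
        simp only [hφ', hDH, this]
      have hft := fundTensor_eq_outer (f := F) (U := {(0:V)}ᶜ) isOpen_compl_singleton
        hF.c1 (v := a + t • h) (hseg t) h h
      have hpos : 0 < fundTensor F (a + t • h) h h :=
        (hF.posdef _ (hseg t)).2.2 h h0
      rw [hshift, hfe]
      have := hft
      nlinarith [this, hpos]
    have hmono : StrictMono φ' := strictMono_of_deriv_pos hderiv_pos
    obtain ⟨ξ, hξ, hslope⟩ := exists_hasDerivAt_eq_slope φ φ' zero_lt_one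
      (fun t _ => (hφd t).continuousAt.continuousWithinAt) (fun x _ => hφd x)
    have hφ1 : φ 1 = 1 := by
      simp only [hφ, one_smul, hh]
      rw [show a + (b - a) = b by abel, hb]; norm_num
    have hφ0 : φ 0 = 1 := by
      simp only [hφ]; rw [zero_smul, add_zero, ha]; norm_num
    rw [hφ1, hφ0] at hslope
    have hξ0 : φ' 0 < φ' ξ := hmono hξ.1
    have hφ'0 : φ' 0 = 2 * (fderiv ℝ F a b - 1) := by
      simp only [hφ', hDH]
      rw [show a + (0:ℝ) • h = a by simp]
      simp only [ContinuousLinearMap.smul_apply, smul_eq_mul]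
      rw [hh, map_sub, hF.euler ha0, ha]; ring
    have : φ' ξ = 0 := by rw [hslope]; norm_num
    rw [this, hφ'0] at hξ0
    linarith

/-- The fundamental inequality `dF_x(y) ≤ F(y)`. -/
lemma IsMinkowskiNorm.fund_ineq (hF : IsMinkowskiNorm F) {x : V} (hx : x ≠ 0) (y : V) :
    fderiv ℝ F x y ≤ F y := by
  rcases eq_or_ne y 0 with rfl | hy
  · simp [hF.map_zero]
  · have hFx := hF.pos x hx
    have hFy := hF.pos y hy
    set a : V := (F x)⁻¹ • x with hadef
    set b : V := (F y)⁻¹ • y with hbdef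
    have ha : F a = 1 := by
      rw [hadef, hF.homog _ (inv_pos.mpr hFx) x, inv_mul_cancel₀ hFx.ne']
    have hb : F b = 1 := by
      rw [hbdef, hF.homog _ (inv_pos.mpr hFy) y, inv_mul_cancel₀ hFy.ne']
    have hfa : fderiv ℝ F a = fderiv ℝ F x := hF.fderiv_smul hx (inv_pos.mpr hFx)
    have hyb : y = F y • b := by rw [hbdef, smul_smul, mul_inv_cancel₀ hFy.ne', one_smul]
    have hab : fderiv ℝ F a b ≤ 1 := by
      rcases eq_or_ne a b with he | hne
      · rw [he, hF.euler (hF.nonzero_of_eq_one hb), hb]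
      · exact le_of_lt (hF.strict_ineq ha hb hne)
    calc fderiv ℝ F x y = fderiv ℝ F a y := by rw [hfa]
    _ = F y * fderiv ℝ F a b := by conv_lhs => rw [hyb, map_smul, smul_eq_mul]
    _ ≤ F y * 1 := by exact mul_le_mul_of_nonneg_left hab hFy.le
    _ = F y := by ring

/-- Injectivity of the Legendre transform on the indicatrix. -/
lemma IsMinkowskiNorm.legendre_inj (hF : IsMinkowskiNorm F) {a b : V} (ha : F a = 1) (hb : F b = 1) {μ : ℝ}
    (hμ : 0 < μ) (heq : ∀ u : V, fderiv ℝ F a u = μ * fderiv ℝ F b u) : a = b := by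
  by_contra hne
  have h1 : fderiv ℝ F a a = 1 := by rw [hF.euler (hF.nonzero_of_eq_one ha), ha]
  have h2 : fderiv ℝ F b b = 1 := by rw [hF.euler (hF.nonzero_of_eq_one hb), hb]
  have hba : fderiv ℝ F b a < 1 := hF.strict_ineq hb ha (Ne.symm hne)
  have hab : fderiv ℝ F a b < 1 := hF.strict_ineq ha hb hne
  have e1 : (1:ℝ) = μ * fderiv ℝ F b a := by rw [← h1, heq a]
  have e2 : fderiv ℝ F a b = μ := by rw [heq b, h2, mul_one]
  nlinarith

end mink

section zermelo
variable {V : Type*} [NormedAddCommGroup V] [NormedSpace ℝ V]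
variable {F : V → ℝ}

lemma IsMinkowskiNorm.root_le (hF : IsMinkowskiNorm F) {W : V} (hW : F (-W) < 1) {v : V}
    {r₁ r₂ : ℝ} (h₁ : 0 < r₁)
    (e₁ : F (v - r₁ • W) = r₁) (e₂ : F (v - r₂ • W) = r₂) : r₁ ≤ r₂ := by
  have hx1 : v - r₁ • W ≠ 0 := by
    intro h; rw [h, hF.map_zero] at e₁; linarith
  have hk : fderiv ℝ F (v - r₁ • W) (-W) ≤ F (-W) := hF.fund_ineq hx1 (-W)
  rw [map_neg] at hk
  have hk1 : -(fderiv ℝ F (v - r₁ • W) W) < 1 := by linarith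
  have hsupp : fderiv ℝ F (v - r₁ • W) (v - r₂ • W) ≤ r₂ := by
    have := hF.fund_ineq hx1 (v - r₂ • W); rw [e₂] at this; exact this
  have hx2 : v - r₂ • W = (v - r₁ • W) + (r₁ - r₂) • W := by
    rw [sub_smul]; abel
  rw [hx2, map_add, map_smul, hF.euler hx1, e₁, smul_eq_mul] at hsupp
  nlinarith [hsupp, hk1]

lemma IsMinkowskiNorm.root_unique (hF : IsMinkowskiNorm F) {W : V} (hW : F (-W) < 1) {v : V}
    {r₁ r₂ : ℝ} (h₁ : 0 < r₁) (h₂ : 0 < r₂)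
    (e₁ : F (v - r₁ • W) = r₁) (e₂ : F (v - r₂ • W) = r₂) : r₁ = r₂ :=
  le_antisymm (hF.root_le hW h₁ e₁ e₂) (hF.root_le hW h₂ e₂ e₁)

lemma zermelo_root (hF : IsMinkowskiNorm F) {Z : V → ℝ} {W : V}
    (hZ : ∀ v : V, v ≠ 0 → 0 < Z v ∧ F ((Z v)⁻¹ • v - W) = 1)
    {v : V} (hv : v ≠ 0) : F (v - Z v • W) = Z v := by
  obtain ⟨hpos, hroot⟩ := hZ v hv
  have : v - Z v • W = Z v • ((Z v)⁻¹ • v - W) := by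
    rw [smul_sub, smul_inv_smul₀ hpos.ne']
  rw [this, hF.homog _ hpos, hroot, mul_one]

lemma zermelo_homog (hF : IsMinkowskiNorm F) {Z : V → ℝ} {W : V} (hW : F (-W) < 1)
    (hZ : ∀ v : V, v ≠ 0 → 0 < Z v ∧ F ((Z v)⁻¹ • v - W) = 1)
    {v : V} (hv : v ≠ 0) {r : ℝ} (hr : 0 < r) : Z (r • v) = r * Z v := by
  have hrv : r • v ≠ 0 := smul_ne_zero hr.ne' hv
  have h1 : F (r • v - Z (r • v) • W) = Z (r • v) := zermelo_root hF hZ hrv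
  have h2 : F (r • v - (r * Z v) • W) = r * Z v := by
    have : r • v - (r * Z v) • W = r • (v - Z v • W) := by
      rw [smul_sub, mul_smul]
    rw [this, hF.homog r hr, zermelo_root hF hZ hv]
  exact hF.root_unique hW (hZ _ hrv).1 (mul_pos hr (hZ v hv).1) h1 h2

end zermelo

set_option maxHeartbeats 2000000

/-- Legendre transform relation between `F` and the Zermelo metric `Z` with navigation data
`(F, W)` under mild wind: if `g^F_{v_F}(v_F, ·) = ℓ = g^Z_{v_Z}(v_Z, ·)` for a nonzero linear
functional `ℓ`, then `v_Z/Z(v_Z) = v_F/F(v_F) + W` and `Z(v_Z) = F(v_F) + ℓ(W)`. -/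
theorem stmt7 {V : Type*} [NormedAddCommGroup V] [NormedSpace ℝ V] [FiniteDimensional ℝ V]
    (F Z : V → ℝ) (hF : IsMinkowskiNorm F) (W : V) (hW : F (-W) < 1)
    (hZ0 : Z 0 = 0) (hZ : ∀ v : V, v ≠ 0 → 0 < Z v ∧ F ((Z v)⁻¹ • v - W) = 1)
    (ℓ : V →ₗ[ℝ] ℝ) (hℓ : ℓ ≠ 0) (vF vZ : V) (hvF0 : vF ≠ 0) (hvZ0 : vZ ≠ 0)
    (hvF : ∀ u : V, fundTensor F vF vF u = ℓ u)
    (hvZ : ∀ u : V, fundTensor Z vZ vZ u = ℓ u) :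
    (Z vZ)⁻¹ • vZ = (F vF)⁻¹ • vF + W ∧ Z vZ = F vF + ℓ W := by
  classical
  obtain ⟨hc, hind⟩ := hZ vZ hvZ0
  set c := Z vZ with hcdef
  set u0 : V := c⁻¹ • vZ - W with hu0def
  have hu0F : F u0 = 1 := hind
  have hu00 : u0 ≠ 0 := hF.nonzero_of_eq_one hu0F
  set p0 : V := vZ - c • W with hp0def
  have hp0u0 : p0 = c • u0 := by rw [hu0def, smul_sub, smul_inv_smul₀ hc.ne']
  have hp00 : p0 ≠ 0 := by rw [hp0u0]; exact smul_ne_zero hc.ne' hu00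
  have hFp0 : F p0 = c := by rw [hp0u0, hF.homog c hc u0, hu0F, mul_one]
  set L : V →L[ℝ] ℝ := fderiv ℝ F p0 with hLdef
  have hLu0 : fderiv ℝ F u0 = L := by
    rw [hLdef, hp0u0]; exact (hF.fderiv_smul hu00 hc).symm
  set k0 : ℝ := L W with hk0def
  have hk0 : -1 < k0 := by
    have := hF.fund_ineq hp00 (-W)
    rw [map_neg] at this
    have h2 : -(L W) ≤ F (-W) := this
    rw [← hk0def] at h2
    linarith
  have h1k0 : (0:ℝ) < 1 + k0 := by linarith
  -- inverse function theorem setup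
  set M : (V × ℝ) →L[ℝ] V :=
    (ContinuousLinearMap.fst ℝ V ℝ) - (ContinuousLinearMap.snd ℝ V ℝ).smulRight W with hMdef
  have hM : ∀ p : V × ℝ, M p = p.1 - p.2 • W := by
    intro p; simp [hMdef]
  set Φ : V × ℝ → V × ℝ := fun p => (p.1, F (p.1 - p.2 • W) - p.2) with hΦdef
  have hM0 : M (vZ, c) = p0 := by rw [hM]
  have hMfun : (fun p : V × ℝ => F (p.1 - p.2 • W)) = F ∘ ⇑M := by
    funext p; rw [Function.comp_apply, hM]
  have hΦc : ContDiffAt ℝ 1 Φ (vZ, c) := by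
    apply ContDiffAt.prodMk
    · exact contDiffAt_fst
    · have h1 : ContDiffAt ℝ 1 F (M (vZ, c)) := by
        rw [hM0]; exact hF.c1.contDiffAt (isOpen_compl_singleton.mem_nhds hp00)
      have h2 : ContDiffAt ℝ 1 (⇑M) (vZ, c) := M.contDiff.contDiffAt
      have h3 := (h1.comp (vZ, c) h2).sub contDiffAt_snd
      have h4 : (fun p : V × ℝ => (F ∘ ⇑M) p - p.2)
          = fun p : V × ℝ => F (p.1 - p.2 • W) - p.2 := by
        funext p; rw [Function.comp_apply, hM]
      rwa [h4] at h3
  have hLp0 : HasFDerivAt F L p0 := (hF.diffAt hp00).hasFDerivAt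
  set e : (V × ℝ) ≃ₗ[ℝ] (V × ℝ) :=
    { toFun := fun p => (p.1, L p.1 - (1 + k0) * p.2)
      map_add' := fun p q => by
        refine Prod.ext_iff.mpr ⟨by simp, ?_⟩
        simp [map_add]; ring
      map_smul' := fun m p => by
        refine Prod.ext_iff.mpr ⟨by simp, ?_⟩
        simp [map_smul]; ring
      invFun := fun p => (p.1, (1 + k0)⁻¹ * (L p.1 - p.2))
      left_inv := fun p => by
        refine Prod.ext_iff.mpr ⟨by simp, ?_⟩
        show (1 + k0)⁻¹ * (L p.1 - (L p.1 - (1 + k0) * p.2)) = p.2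
        have hne : (1 + k0) ≠ 0 := h1k0.ne'
        field_simp
        ring
      right_inv := fun p => by
        refine Prod.ext_iff.mpr ⟨by simp, ?_⟩
        show L p.1 - (1 + k0) * ((1 + k0)⁻¹ * (L p.1 - p.2)) = p.2
        have hne : (1 + k0) ≠ 0 := h1k0.ne'
        field_simp
        ring } with hedef
  set E : (V × ℝ) ≃L[ℝ] (V × ℝ) := e.toContinuousLinearEquiv with hEdef
  have hEcoe : ∀ p : V × ℝ, (E : (V × ℝ) →L[ℝ] V × ℝ) p = (p.1, L p.1 - (1 + k0) * p.2) := by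
    intro p
    have : (E : (V × ℝ) →L[ℝ] V × ℝ) p = e p := by
      rw [hEdef]; rfl
    rw [this]; rfl
  have hD : HasFDerivAt Φ ((E : (V × ℝ) ≃L[ℝ] V × ℝ) : (V × ℝ) →L[ℝ] V × ℝ) (vZ, c) := by
    have hcomp : HasFDerivAt (F ∘ ⇑M) (L.comp M) (vZ, c) := by
      have h1 : HasFDerivAt F L (M (vZ, c)) := by rw [hM0]; exact hLp0
      exact h1.comp (vZ, c) M.hasFDerivAt
    have hsub : HasFDerivAt (fun p : V × ℝ => F (p.1 - p.2 • W) - p.2)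
        (L.comp M - ContinuousLinearMap.snd ℝ V ℝ) (vZ, c) := by
      have := hcomp.sub ((ContinuousLinearMap.snd ℝ V ℝ).hasFDerivAt)
      have h4 : (fun p : V × ℝ => (F ∘ ⇑M) p - (ContinuousLinearMap.snd ℝ V ℝ) p)
          = fun p : V × ℝ => F (p.1 - p.2 • W) - p.2 := by
        funext p; rw [Function.comp_apply, hM]; rfl
      rw [← h4]; exact this
    have hpair : HasFDerivAt Φ
        ((ContinuousLinearMap.fst ℝ V ℝ).prod (L.comp M - ContinuousLinearMap.snd ℝ V ℝ))
        (vZ, c) := ((ContinuousLinearMap.fst ℝ V ℝ).hasFDerivAt).prodMk hsub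
    have hEeq : ((E : (V × ℝ) ≃L[ℝ] V × ℝ) : (V × ℝ) →L[ℝ] V × ℝ)
        = (ContinuousLinearMap.fst ℝ V ℝ).prod (L.comp M - ContinuousLinearMap.snd ℝ V ℝ) := by
      apply ContinuousLinearMap.ext
      intro p
      rw [hEcoe p]
      simp only [ContinuousLinearMap.prod_apply, ContinuousLinearMap.coe_fst',
        ContinuousLinearMap.coe_comp', Function.comp_apply, ContinuousLinearMap.sub_apply,
        ContinuousLinearMap.coe_snd', Prod.mk.injEq]
      refine ⟨trivial, ?_⟩
      rw [hM, map_sub, map_smul]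
      simp only [smul_eq_mul, ← hk0def]
      ring
    rw [hEeq]
    exact hpair
  have hΦvZ : Φ (vZ, c) = (vZ, 0) := by
    show ((vZ, c).1, F ((vZ, c).1 - (vZ, c).2 • W) - (vZ, c).2) = (vZ, (0:ℝ))
    simp only [Prod.mk.injEq]
    refine ⟨trivial, ?_⟩
    show F (vZ - c • W) - c = 0
    rw [← hp0def, hFp0]; ring
  set g : V × ℝ → V × ℝ := hΦc.localInverse hD one_ne_zero with hgdef
  have hg_smooth : ContDiffAt ℝ 1 g (vZ, 0) := by
    have := hΦc.to_localInverse hD one_ne_zero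
    rwa [hΦvZ] at this
  have hg_image : g (vZ, 0) = (vZ, c) := by
    have := hΦc.localInverse_apply_image hD one_ne_zero
    rwa [hΦvZ] at this
  have hg_right : ∀ᶠ y in 𝓝 (vZ, (0:ℝ)), Φ (g y) = y := by
    have := (hΦc.hasStrictFDerivAt' hD one_ne_zero).eventually_right_inverse
    rwa [hΦvZ] at this
  set ζ : V → ℝ := fun x => (g (x, 0)).2 with hζdef
  have hpt : ContDiffAt ℝ 1 (fun x : V => (x, (0:ℝ))) vZ := contDiffAt_id.prodMk contDiffAt_const
  have hζ1 : ContDiffAt ℝ 1 ζ vZ := contDiffAt_snd.comp vZ (hg_smooth.comp vZ hpt)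
  have hζvZ : ζ vZ = c := by
    show (g (vZ, 0)).2 = c
    rw [hg_image]
  have htend : Filter.Tendsto (fun x : V => (x, (0:ℝ))) (𝓝 vZ) (𝓝 (vZ, (0:ℝ))) :=
    (continuous_id.prodMk continuous_const).continuousAt
  have hev_eq : ∀ᶠ x in 𝓝 vZ, F (x - ζ x • W) = ζ x := by
    filter_upwards [htend.eventually hg_right] with x hx
    have h1 : (g (x, 0)).1 = x := congrArg Prod.fst hx
    have h2 : F ((g (x, 0)).1 - (g (x, 0)).2 • W) - (g (x, 0)).2 = 0 := congrArg Prod.snd hx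
    rw [h1] at h2
    have h3 : F (x - ζ x • W) - ζ x = 0 := h2
    linarith
  have hζpos : ∀ᶠ x in 𝓝 vZ, 0 < ζ x := by
    have hcont : Filter.Tendsto ζ (𝓝 vZ) (𝓝 c) := by
      rw [← hζvZ]; exact hζ1.continuousAt
    exact hcont.eventually (eventually_gt_nhds hc)
  have hZeq : Z =ᶠ[𝓝 vZ] ζ := by
    filter_upwards [hev_eq, hζpos, eventually_ne_nhds hvZ0] with x h1 h2 hx0
    exact hF.root_unique hW (hZ x hx0).1 h2 (zermelo_root hF hZ hx0) h1
  have hZc1 : ContDiffAt ℝ 1 Z vZ := hζ1.congr_of_eventuallyEq hZeq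
  have hζdiff : DifferentiableAt ℝ ζ vZ := hζ1.differentiableAt one_ne_zero
  set T : V →L[ℝ] ℝ := fderiv ℝ ζ vZ with hTdef
  have hLT : ∀ u : V, L u = (1 + k0) * T u := by
    have hinner : HasFDerivAt (fun x : V => x - ζ x • W)
        (ContinuousLinearMap.id ℝ V - T.smulRight W) vZ :=
      (hasFDerivAt_id vZ).sub (hζdiff.hasFDerivAt.smul_const W)
    have hpt2 : HasFDerivAt F L (vZ - ζ vZ • W) := by
      rw [hζvZ, ← hp0def]; exact hLp0
    have hcomp2 : HasFDerivAt (fun x : V => F (x - ζ x • W))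
        (L.comp (ContinuousLinearMap.id ℝ V - T.smulRight W)) vZ :=
      hpt2.comp vZ hinner
    have hfeq : fderiv ℝ (fun x : V => F (x - ζ x • W)) vZ = fderiv ℝ ζ vZ :=
      Filter.EventuallyEq.fderiv_eq hev_eq
    have hthis := hcomp2.fderiv
    rw [hfeq, ← hTdef] at hthis
    intro u
    have happ : (L.comp (ContinuousLinearMap.id ℝ V - T.smulRight W)) u = T u :=
      ContinuousLinearMap.ext_iff.mp hthis.symm u
    simp only [ContinuousLinearMap.comp_apply, ContinuousLinearMap.sub_apply,
      ContinuousLinearMap.id_apply, ContinuousLinearMap.smulRight_apply] at happ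
    rw [map_sub, map_smul] at happ
    simp only [smul_eq_mul, ← hk0def] at happ
    linarith [happ]
  -- a C¹ neighborhood of vZ for Z
  obtain ⟨U₁, hU₁, hZU₁⟩ := hZc1.contDiffOn le_rfl (by simp)
  set UZ : Set V := interior U₁ ∩ {(0:V)}ᶜ with hUZdef
  have hUZopen : IsOpen UZ := isOpen_interior.inter isOpen_compl_singleton
  have hvZUZ : vZ ∈ UZ := ⟨mem_interior_iff_mem_nhds.mpr hU₁, hvZ0⟩
  have hZUZ : ContDiffOn ℝ 1 Z UZ := hZU₁.mono (fun x hx => interior_subset hx.1)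
  have hhomUZ : ∀ x ∈ UZ, ∀ r : ℝ, 0 < r → Z (r • x) = r * Z x := fun x hx r hr =>
    zermelo_homog hF hW hZ hx.2 hr
  have eqZ : ∀ u : V, (ℓ u : ℝ) = c * fderiv ℝ Z vZ u := by
    intro u
    rw [← hvZ u]
    exact fundTensor_radial hUZopen hZUZ hvZUZ hhomUZ u
  have hfZT : fderiv ℝ Z vZ = T := by rw [hTdef]; exact hZeq.fderiv_eq
  have hcL : ∀ u : V, c * L u = (1 + k0) * ℓ u := by
    intro u
    rw [eqZ u, hfZT, hLT u]; ring
  have eqF : ∀ u : V, (ℓ u : ℝ) = F vF * fderiv ℝ F vF u := by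
    intro u
    rw [← hvF u]
    exact fundTensor_radial isOpen_compl_singleton hF.c1 hvF0
      (fun x hx r hr => hF.homog r hr x) u
  set b := F vF with hbdef
  have hb : 0 < b := hF.pos vF hvF0
  set w1 : V := b⁻¹ • vF with hw1def
  have hw1F : F w1 = 1 := by
    rw [hw1def, hF.homog _ (inv_pos.mpr hb) vF, inv_mul_cancel₀ hb.ne']
  have hfw1 : fderiv ℝ F w1 = fderiv ℝ F vF := hF.fderiv_smul hvF0 (inv_pos.mpr hb)
  have hμpos : 0 < (1 + k0) * b / c := div_pos (mul_pos h1k0 hb) hc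
  have hkey : ∀ u : V, fderiv ℝ F u0 u = ((1 + k0) * b / c) * fderiv ℝ F w1 u := by
    intro u
    rw [hLu0, hfw1]
    have h1 := hcL u
    have h2 := eqF u
    have hcne : c ≠ 0 := hc.ne'
    field_simp
    linear_combination h1 + (1 + k0) * h2
  have hu0w1 : u0 = w1 := hF.legendre_inj hu0F hw1F hμpos hkey
  constructor
  · have h5 : c⁻¹ • vZ = u0 + W := by rw [hu0def]; abel
    rw [h5, hu0w1, hw1def]
  · have heulerZ : fderiv ℝ Z vZ vZ = c :=
      euler_one_homog (hZc1.differentiableAt one_ne_zero)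
        (fun r hr => zermelo_homog hF hW hZ hvZ0 hr)
    have hℓvZ : (ℓ vZ : ℝ) = c * c := by rw [eqZ vZ, heulerZ]
    have hℓu0 : (ℓ u0 : ℝ) = c - ℓ W := by
      rw [hu0def, map_sub, map_smul, smul_eq_mul, hℓvZ]
      field_simp
    have hℓvF : (ℓ vF : ℝ) = b * b := by
      rw [eqF vF, hF.euler hvF0]
    have hℓw1 : (ℓ w1 : ℝ) = b := by
      rw [hw1def, map_smul, smul_eq_mul, hℓvF]
      field_simp
    rw [hu0w1, hℓw1] at hℓu0
    linarith
end

section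
/- Let (V, h) be a finite-dimensional real inner product space with norm ‖·‖, let W ∈ V with ‖W‖ < 1, and let R be the Randers metric with navigation data (h, W). Let L ⊆ V be a linear subspace, and decompose W = W^⊤ + W^⊥ with W^⊤ ∈ L and W^⊥ ∈ L^⊥ (orthogonal complement with respect to h). Set λ := 1/(1 − ‖W^⊥‖²). Then λ·‖W^⊤‖² < 1 and, for every v ∈ L ∖ {0}, λ · ‖v/R(v) − W^⊤‖² = 1. In other words, the restriction of R to L is the Randers metric on L with navigation data (λ·h|_{L×L}, W^⊤). -/
/-! Since `W - W^⊤ ⊥ L`, Pythagoras gives `‖x - W‖² = ‖x - W^⊤‖² + ‖W^⊥‖²` for every `x ∈ L`.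
Taking `x = 0` turns `‖W‖ < 1` into `‖W^⊤‖² < 1 - ‖W^⊥‖²`, and taking `x = v / R(v)`, where the
left side is `1`, gives `‖v / R(v) - W^⊤‖² = 1 - ‖W^⊥‖²`. -/

namespace Submodule

variable {𝕜 E : Type*} [RCLike 𝕜] [NormedAddCommGroup E] [InnerProductSpace 𝕜 E]
  (K : Submodule 𝕜 E) [K.HasOrthogonalProjection]

theorem norm_sub_sq_eq_norm_sub_starProjection_sq_add {x : E} (hx : x ∈ K) (w : E) :
    ‖x - w‖ ^ 2 = ‖x - K.starProjection w‖ ^ 2 + ‖w - K.starProjection w‖ ^ 2 := by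
  have horth : inner 𝕜 (x - K.starProjection w) (-(w - K.starProjection w)) = 0 := by
    rw [inner_neg_right, neg_eq_zero]
    exact K.sub_starProjection_mem_orthogonal w _
      (K.sub_mem hx (K.starProjection_apply_mem w))
  have hsplit : x - w = (x - K.starProjection w) + -(w - K.starProjection w) := by abel
  rw [hsplit, sq, sq, sq, norm_add_sq_eq_norm_sq_add_norm_sq_of_inner_eq_zero _ _ horth,
    norm_neg]

theorem norm_sq_eq_norm_starProjection_sq_add (w : E) :
    ‖w‖ ^ 2 = ‖K.starProjection w‖ ^ 2 + ‖w - K.starProjection w‖ ^ 2 := by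
  simpa using K.norm_sub_sq_eq_norm_sub_starProjection_sq_add K.zero_mem w

end Submodule

theorem stmt13_general {V : Type*} [NormedAddCommGroup V] [InnerProductSpace ℝ V]
    [FiniteDimensional ℝ V] (W : V) (hW : ‖W‖ < 1) (R : V → ℝ)
    (hR : ∀ v : V, v ≠ 0 → 0 < R v ∧ ‖(R v)⁻¹ • v - W‖ = 1)
    (L : Submodule ℝ V) :
    (1 - ‖W - (Submodule.orthogonalProjection L W : V)‖ ^ 2)⁻¹ *
        ‖(Submodule.orthogonalProjection L W : V)‖ ^ 2 < 1 ∧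
    ∀ v : V, v ∈ L → v ≠ 0 →
      (1 - ‖W - (Submodule.orthogonalProjection L W : V)‖ ^ 2)⁻¹ *
        ‖(R v)⁻¹ • v - (Submodule.orthogonalProjection L W : V)‖ ^ 2 = 1 := by
  simp only [Submodule.coe_orthogonalProjectionOnto_apply]
  have hW_sq := L.norm_sq_eq_norm_starProjection_sq_add W
  have hpos : 0 < 1 - ‖W - L.starProjection W‖ ^ 2 := by
    nlinarith [norm_nonneg W, sq_nonneg ‖L.starProjection W‖]
  refine ⟨?_, fun v hv hv0 => ?_⟩
  · rw [inv_mul_lt_iff₀ hpos, mul_one]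
    nlinarith [norm_nonneg W]
  · have hunit := L.norm_sub_sq_eq_norm_sub_starProjection_sq_add (L.smul_mem (R v)⁻¹ hv) W
    rw [(hR v hv0).2] at hunit
    rw [inv_mul_eq_one₀ hpos.ne']
    linarith

/-- The restriction of a Randers metric `R` with navigation data `(h, W)` (mild wind) to a
linear subspace `L` is the Randers metric on `L` with navigation data `(λ·h|_L, W^⊤)`, where
`W = W^⊤ + W^⊥` is the orthogonal decomposition along `L` and `λ = 1/(1 − ‖W^⊥‖²)`:
one has `λ‖W^⊤‖² < 1` and `λ‖v/R(v) − W^⊤‖² = 1` for every `v ∈ L ∖ {0}`. -/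
theorem stmt13 {V : Type*} [NormedAddCommGroup V] [InnerProductSpace ℝ V]
    [FiniteDimensional ℝ V] (W : V) (hW : ‖W‖ < 1) (R : V → ℝ) (hR0 : R 0 = 0)
    (hR : ∀ v : V, v ≠ 0 → 0 < R v ∧ ‖(R v)⁻¹ • v - W‖ = 1)
    (L : Submodule ℝ V) :
    (1 - ‖W - (Submodule.orthogonalProjection L W : V)‖ ^ 2)⁻¹ *
        ‖(Submodule.orthogonalProjection L W : V)‖ ^ 2 < 1 ∧
    ∀ v : V, v ∈ L → v ≠ 0 →
      (1 - ‖W - (Submodule.orthogonalProjection L W : V)‖ ^ 2)⁻¹ *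
        ‖(R v)⁻¹ • v - (Submodule.orthogonalProjection L W : V)‖ ^ 2 = 1 :=
  stmt13_general W hW R hR L
end
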